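/- Let f : ℤ_p → ℤ_p be a surjective 1-Lipschitz map. If f is ergodic for the Haar measure μ_p, then f is minimal: every forward orbit is dense in ℤ_p. -/

import Mathlib

/-!
Reduction modulo `p ^ n` turns a 1-Lipschitz map `f` into a map on `ZMod (p ^ n)`, so the union
`A` of the residue classes met by the forward orbit of `x` satisfies `f '' A ⊆ A`. For an ergodic
map such a set is null or conull. Translation invariance gives every residue class the same,
hence positive, measure; `A` contains the class of `x`, so it is conull and must meet every class.
An orbit meeting every residue class modulo every `p ^ n` is dense.
-/

open MeasureTheory

theorem Ergodic.exists_iterate_eq_of_factor {X Y : Type*} [MeasurableSpace X] {μ : Measure X}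
    [IsFiniteMeasure μ] {f : X → X} (hf : Ergodic f μ) {π : X → Y}
    (hfib : ∀ y, MeasurableSet (π ⁻¹' {y})) (hpos : ∀ y, μ (π ⁻¹' {y}) ≠ 0)
    (hfactor : ∀ x x', π x = π x' → π (f x) = π (f x')) (x : X) (y : Y) :
    ∃ k, π (f^[k] x) = y := by
  set A := ⋃ k, π ⁻¹' {π (f^[k] x)}
  have hA : MeasurableSet A := .iUnion fun k => hfib _
  have himage : f '' A ⊆ A := by
    rintro _ ⟨w, hw, rfl⟩
    obtain ⟨k, hk⟩ := Set.mem_iUnion.mp hw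
    refine Set.mem_iUnion.mpr ⟨k + 1, ?_⟩
    rw [Set.mem_preimage, Set.mem_singleton_iff, Function.iterate_succ_apply']
    exact hfactor _ _ hk
  rcases hf.ae_empty_or_univ_of_image_ae_le hA.nullMeasurableSet himage.eventuallyLE
    with hnull | hconull
  · refine absurd (measure_mono_null ?_ (ae_eq_empty.mp hnull)) (hpos (π x))
    exact Set.subset_iUnion (fun k => π ⁻¹' {π (f^[k] x)}) 0
  · by_contra! hmiss
    refine hpos y <|
      measure_mono_null (t := Aᶜ) (fun w hw hwA => ?_) (ae_eq_univ.mp hconull)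
    obtain ⟨k, hk⟩ := Set.mem_iUnion.mp hwA
    exact hmiss k (hk.symm.trans hw)

theorem AddMonoidHom.measure_preimage_singleton_ne_zero {G H : Type*} [AddGroup G]
    [AddGroup H] [Countable H] [MeasurableSpace G] {μ : Measure G} [NeZero μ]
    (hinv : ∀ (a : G) (A : Set G), MeasurableSet A → μ ((fun x => a + x) ⁻¹' A) = μ A)
    {π : G →+ H} (hπ : Function.Surjective π) (hfib : ∀ c, MeasurableSet (π ⁻¹' {c}))
    (c : H) :
    μ (π ⁻¹' {c}) ≠ 0 := by
  have hfiber_eq : ∀ c', μ (π ⁻¹' {c'}) = μ (π ⁻¹' {c}) := fun c' => by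
    obtain ⟨a, ha⟩ := hπ (c - c')
    have htranslate : (fun x => a + x) ⁻¹' (π ⁻¹' {c}) = π ⁻¹' {c'} := by
      ext w
      simp only [Set.mem_preimage, Set.mem_singleton_iff, map_add, ha]
      exact ⟨fun h => add_left_cancel (h.trans (sub_add_cancel c c').symm),
        fun h => h ▸ sub_add_cancel c c'⟩
    rw [← htranslate, hinv a _ (hfib c)]
  intro hc
  refine NeZero.ne μ (Measure.measure_univ_eq_zero.mp ?_)
  rw [← Set.preimage_univ (f := π), ← Set.iUnion_of_singleton H, Set.preimage_iUnion]
  exact measure_iUnion_null fun c' => (hfiber_eq c').trans hc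

namespace PadicInt

variable {p : ℕ} [Fact p.Prime]

theorem toZModPow_eq_iff_norm_sub_le (n : ℕ) (x y : ℤ_[p]) :
    toZModPow n x = toZModPow n y ↔ ‖x - y‖ ≤ (p : ℝ) ^ (-(n : ℤ)) := by
  rw [← sub_eq_zero, ← map_sub, ← RingHom.mem_ker, ker_toZModPow,
    norm_le_pow_iff_mem_span_pow]

theorem toZModPow_map_eq_of_lipschitz {f : ℤ_[p] → ℤ_[p]}
    (hf : ∀ x y : ℤ_[p], ‖f y - f x‖ ≤ ‖y - x‖) {n : ℕ} {x y : ℤ_[p]}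
    (h : toZModPow n x = toZModPow n y) : toZModPow n (f x) = toZModPow n (f y) := by
  rw [toZModPow_eq_iff_norm_sub_le] at h ⊢
  exact (hf y x).trans h

theorem measurableSet_preimage_toZModPow [MeasurableSpace ℤ_[p]] [OpensMeasurableSpace ℤ_[p]]
    (n : ℕ) (c : ZMod (p ^ n)) : MeasurableSet (toZModPow n ⁻¹' {c}) := by
  obtain ⟨x, rfl⟩ := ZMod.ringHom_surjective (toZModPow n) c
  have hball :
      toZModPow n ⁻¹' {toZModPow n x} = Metric.closedBall x ((p : ℝ) ^ (-(n : ℤ))) := by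
    ext w
    rw [Set.mem_preimage, Set.mem_singleton_iff, toZModPow_eq_iff_norm_sub_le,
      Metric.mem_closedBall, dist_eq_norm]
  rw [hball]
  exact measurableSet_closedBall

theorem dense_of_forall_exists_toZModPow_eq {s : Set ℤ_[p]}
    (hs : ∀ (n : ℕ) (z : ℤ_[p]), ∃ y ∈ s, toZModPow n y = toZModPow n z) : Dense s := by
  refine Metric.dense_iff.mpr fun z ε hε => ?_
  obtain ⟨n, hn⟩ := exists_pow_neg_lt p hε
  obtain ⟨y, hys, hy⟩ := hs n z
  refine ⟨y, Metric.mem_ball.mpr ?_, hys⟩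
  rw [dist_eq_norm]
  exact ((toZModPow_eq_iff_norm_sub_le n y z).mp hy).trans_lt hn

end PadicInt

theorem stmt10_general (p : ℕ) [Fact p.Prime] [MeasurableSpace ℤ_[p]] [BorelSpace ℤ_[p]]
    (μ : MeasureTheory.Measure ℤ_[p]) [MeasureTheory.IsProbabilityMeasure μ]
    (hinv : ∀ (a : ℤ_[p]) (A : Set ℤ_[p]), MeasurableSet A → μ ((fun x => a + x) ⁻¹' A) = μ A)
    (f : ℤ_[p] → ℤ_[p])
    (hlip : ∀ x y : ℤ_[p], ‖f y - f x‖ ≤ ‖y - x‖)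
    (herg : Ergodic f μ) :
    ∀ x : ℤ_[p], Dense (Set.range fun k : ℕ => f^[k] x) := by
  intro x
  refine PadicInt.dense_of_forall_exists_toZModPow_eq fun n z => ?_
  have hfib := PadicInt.measurableSet_preimage_toZModPow (p := p) n
  have hpos :=
    (PadicInt.toZModPow (p := p) n).toAddMonoidHom.measure_preimage_singleton_ne_zero
      hinv (ZMod.ringHom_surjective _) hfib
  obtain ⟨k, hk⟩ := herg.exists_iterate_eq_of_factor hfib hpos
    (fun _ _ => PadicInt.toZModPow_map_eq_of_lipschitz hlip) x (PadicInt.toZModPow n z)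
  exact ⟨f^[k] x, ⟨k, rfl⟩, hk⟩

theorem stmt10 (p : ℕ) [Fact p.Prime] [MeasurableSpace ℤ_[p]] [BorelSpace ℤ_[p]]
    (μ : MeasureTheory.Measure ℤ_[p]) [MeasureTheory.IsProbabilityMeasure μ]
    (hinv : ∀ (a : ℤ_[p]) (A : Set ℤ_[p]), MeasurableSet A → μ ((fun x => a + x) ⁻¹' A) = μ A)
    (f : ℤ_[p] → ℤ_[p])
    (hlip : ∀ x y : ℤ_[p], ‖f y - f x‖ ≤ ‖y - x‖)
    (hsurj : Function.Surjective f)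
    (herg : Ergodic f μ) :
    ∀ x : ℤ_[p], Dense (Set.range fun k : ℕ => f^[k] x) :=
  stmt10_general p μ hinv f hlip herg
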